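/- arXiv:2310.11065 — 2 statements merged into one kernel-verified Lean document; each statement's English description precedes it below -/
import Mathlib

section
/- Let (Ω, F, P) be a probability space with sub-σ-algebras G_n ⊆ F, and for each n let Δ_n be a G_n-measurable real random variable and Δ_n^{*1}, …, Δ_n^{*B} real random variables that are conditionally independent given G_n. Let Φ be the cumulative distribution function of a mean-zero Gaussian law on ℝ. If (i) P(Δ_n ≤ x) → Φ(x) for every x ∈ ℝ, and (ii) for each b = 1,…,B and every x ∈ ℝ the conditional probability E[1{Δ_n^{*b} ≤ x} | G_n] → Φ(x) in probability, then the vector (Δ_n, Δ_n^{*1}, …, Δ_n^{*B}) converges in distribution to (Z₀, Z₁, …, Z_B), where Z₀, …, Z_B are i.i.d. with distribution function Φ; in particular, for all x₀, x₁, …, x_B ∈ ℝ, P(Δ_n ≤ x₀, Δ_n^{*1} ≤ x₁, …, Δ_n^{*B} ≤ x_B) → Φ(x₀)Φ(x₁)⋯Φ(x_B). -/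
/-!
Conditioning on `𝒢_n`, the event `{Δ_n ≤ x₀}` can be pulled out of the expectation, so by
conditional independence `P(Δ_n ≤ x₀, Δ_n^* ≤ x) = E[1{Δ_n ≤ x₀} ∏_b F_{n,b}]`, where
`F_{n,b} = P(Δ_n^{*b} ≤ x_b | 𝒢_n)`. The `F_{n,b}` take values in `[0, 1]` and converge in
probability to `Φ(x_b)`, hence their product converges to `∏_b Φ(x_b)` in `L¹`; what is left is
`P(Δ_n ≤ x₀) ∏_b Φ(x_b) → Φ(x₀) ∏_b Φ(x_b)`.

Convergence of the joint distribution functions at every point then gives convergence in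
distribution: by inclusion–exclusion it gives convergence on half-open boxes, and these form a
π-system containing arbitrarily small neighbourhoods of every point.
-/

open MeasureTheory ProbabilityTheory Filter Set Topology

section Boxes

variable {ι : Type*}

theorem isPiSystem_pi_Ioc {α : Type*} [LinearOrder α] :
    IsPiSystem (range fun p : (ι → α) × (ι → α) => univ.pi fun i => Ioc (p.1 i) (p.2 i)) := by
  rintro _ ⟨p, rfl⟩ _ ⟨q, rfl⟩ -
  exact ⟨(p.1 ⊔ q.1, p.2 ⊓ q.2), by
    simp only [← pi_inter_distrib, Ioc_inter_Ioc, Pi.sup_apply, Pi.inf_apply, max_def, min_def]⟩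

theorem exists_pi_Ioc_mem_nhds_subset [Fintype ι] {u : Set (ι → ℝ)} (hu : IsOpen u) {x : ι → ℝ}
    (hx : x ∈ u) : ∃ a b : ι → ℝ, (univ.pi fun i => Ioc (a i) (b i)) ∈ 𝓝 x ∧
      (univ.pi fun i => Ioc (a i) (b i)) ⊆ u := by
  obtain ⟨ε, hε, hball⟩ := Metric.isOpen_iff.mp hu x hx
  refine ⟨fun i => x i - ε / 2, fun i => x i + ε / 2,
    set_pi_mem_nhds finite_univ fun i _ => Ioc_mem_nhds (by linarith) (by linarith),
    fun z hz => hball ((dist_pi_lt_iff hε).2 fun i => ?_)⟩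
  obtain ⟨h₁, h₂⟩ := hz i (mem_univ i)
  rw [Real.dist_eq, abs_sub_lt_iff]
  constructor <;> linarith

theorem pi_univ_Ioc_eq_biUnion_Iic_sdiff [DecidableEq ι] [Fintype ι] {α : Type*} [LinearOrder α]
    (a b : ι → α) :
    (univ.pi fun i => Ioc (a i) (b i)) =
      (⋃ s ∈ insert (Iic b) (Finset.univ.image fun i => Iic (Function.update b i (a i))), s) \
        ⋃ s ∈ Finset.univ.image fun i => Iic (Function.update b i (a i)), s := by
  ext z
  simp only [Set.mem_pi, mem_univ, mem_Ioc, forall_const, Set.mem_sdiff, mem_iUnion,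
    Finset.mem_insert, Finset.mem_image, Finset.mem_univ, true_and, exists_prop, exists_eq_or_imp,
    exists_exists_eq_and, mem_Iic, le_update_iff]
  constructor
  · exact fun h => ⟨Or.inl fun i => (h i).2, fun ⟨i, hi, _⟩ => (h i).1.not_ge hi⟩
  · rintro ⟨hzb, hn⟩
    have hzb : z ≤ b := hzb.resolve_right hn
    exact fun i => ⟨lt_of_not_ge fun hi => hn ⟨i, hi, fun j _ => hzb j⟩, hzb i⟩

theorem tendsto_measureReal_pi_Ioc_of_tendsto_measureReal_Iic [Fintype ι] {κ : Type*}
    {l : Filter κ} {μs : κ → Measure (ι → ℝ)} {μ : Measure (ι → ℝ)}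
    [∀ k, IsFiniteMeasure (μs k)] [IsFiniteMeasure μ]
    (h : ∀ x, Tendsto (fun k => (μs k).real (Iic x)) l (𝓝 (μ.real (Iic x)))) (a b : ι → ℝ) :
    Tendsto (fun k => (μs k).real (univ.pi fun i => Ioc (a i) (b i))) l
      (𝓝 (μ.real (univ.pi fun i => Ioc (a i) (b i)))) := by
  classical
  set T := Finset.univ.image fun i => Iic (Function.update b i (a i))
  have hIic : IsPiSystem (range (Iic : (ι → ℝ) → Set (ι → ℝ))) := by
    rintro _ ⟨x, rfl⟩ _ ⟨y, rfl⟩ -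
    exact ⟨x ⊓ y, Iic_inter_Iic.symm⟩
  have hunion (t : Finset (Set (ι → ℝ))) (ht : ∀ s ∈ t, s ∈ range Iic) :
      Tendsto (fun k => (μs k).real (⋃ s ∈ t, s)) l (𝓝 (μ.real (⋃ s ∈ t, s))) :=
    hIic.tendsto_measureReal_biUnion ht (by rintro _ ⟨x, rfl⟩; exact measurableSet_Iic)
      (by rintro _ ⟨x, rfl⟩; exact h x)
  have hT : ∀ s ∈ T, s ∈ range Iic := by simp [T]
  have hdiff (ν : Measure (ι → ℝ)) [IsFiniteMeasure ν] :
      ν.real (univ.pi fun i => Ioc (a i) (b i)) =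
        ν.real (⋃ s ∈ insert (Iic b) T, s) - ν.real (⋃ s ∈ T, s) := by
    rw [pi_univ_Ioc_eq_biUnion_Iic_sdiff]
    exact measureReal_sdiff (biUnion_subset_biUnion_left (by simp))
      (Finset.measurableSet_biUnion _ fun s hs => by
        obtain ⟨x, rfl⟩ := hT s hs
        exact measurableSet_Iic)
      (measure_ne_top ν _)
  simp only [hdiff]
  exact (hunion _ (by simpa using hT)).sub (hunion T hT)

theorem ProbabilityMeasure.tendsto_of_tendsto_measureReal_Iic [Fintype ι] {κ : Type*}
    {l : Filter κ} [l.IsCountablyGenerated] {μs : κ → ProbabilityMeasure (ι → ℝ)}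
    {μ : ProbabilityMeasure (ι → ℝ)}
    (h : ∀ x, Tendsto (fun k => (μs k : Measure (ι → ℝ)).real (Iic x)) l
      (𝓝 ((μ : Measure (ι → ℝ)).real (Iic x)))) :
    Tendsto μs l (𝓝 μ) := by
  refine isPiSystem_pi_Ioc.tendsto_probabilityMeasure_of_tendsto_of_mem ?_ ?_ ?_
  · rintro _ ⟨p, rfl⟩
    exact MeasurableSet.univ_pi fun i => measurableSet_Ioc
  · intro u hu x hx
    obtain ⟨a, b, hnhds, hsub⟩ := exists_pi_Ioc_mem_nhds_subset hu hx
    exact ⟨_, ⟨(a, b), rfl⟩, hnhds, hsub⟩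
  · rintro _ ⟨p, rfl⟩
    rw [← NNReal.tendsto_coe]
    simpa using tendsto_measureReal_pi_Ioc_of_tendsto_measureReal_Iic h p.1 p.2

end Boxes

theorem Finset.norm_prod_sub_prod_le_sum_norm_sub {ι R : Type*} [NormedCommRing R]
    [NormOneClass R] (s : Finset ι) {a c : ι → R} (ha : ∀ i ∈ s, ‖a i‖ ≤ 1)
    (hc : ∀ i ∈ s, ‖c i‖ ≤ 1) :
    ‖∏ i ∈ s, a i - ∏ i ∈ s, c i‖ ≤ ∑ i ∈ s, ‖a i - c i‖ := by
  classical
  induction s using Finset.induction_on with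
  | empty => simp
  | insert j s hj ih =>
    simp only [Finset.mem_insert, forall_eq_or_imp] at ha hc
    rw [Finset.prod_insert hj, Finset.prod_insert hj, Finset.sum_insert hj]
    have hcs : ‖∏ i ∈ s, c i‖ ≤ 1 :=
      (Finset.norm_prod_le s c).trans (Finset.prod_le_one (fun i _ => norm_nonneg _) hc.2)
    have hsum := ih ha.2 hc.2
    calc ‖a j * ∏ i ∈ s, a i - c j * ∏ i ∈ s, c i‖
        = ‖a j * (∏ i ∈ s, a i - ∏ i ∈ s, c i) + (a j - c j) * ∏ i ∈ s, c i‖ := by ring_nf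
      _ ≤ ‖a j‖ * ‖∏ i ∈ s, a i - ∏ i ∈ s, c i‖ + ‖a j - c j‖ * ‖∏ i ∈ s, c i‖ :=
        norm_add_le_of_le (norm_mul_le _ _) (norm_mul_le _ _)
      _ ≤ ‖a j - c j‖ + ∑ i ∈ s, ‖a i - c i‖ := by
        nlinarith [norm_nonneg (a j), norm_nonneg (a j - c j),
          norm_nonneg (∏ i ∈ s, a i - ∏ i ∈ s, c i)]

section InMeasure

variable {α : Type*} [MeasurableSpace α] {μ : Measure α} [IsFiniteMeasure μ]

theorem tendsto_integral_abs_sub_of_tendstoInMeasure {f : ℕ → α → ℝ} {g : α → ℝ} {C : ℝ}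
    (hf : ∀ n, AEStronglyMeasurable (f n) μ) (hg : AEStronglyMeasurable g μ)
    (hbound : ∀ n, ∀ᵐ x ∂μ, |f n x - g x| ≤ C) (hfg : TendstoInMeasure μ f atTop g) :
    Tendsto (fun n => ∫ x, |f n x - g x| ∂μ) atTop (𝓝 0) := by
  refine tendsto_of_subseq_tendsto fun ns hns => ?_
  obtain ⟨ms, -, hae⟩ := (hfg.comp hns).exists_seq_tendsto_ae
  refine ⟨ms, ?_⟩
  have hlim := tendsto_integral_of_dominated_convergence (fun _ => C)
    (fun k => ((hf _).sub hg).norm) (integrable_const C) (fun k => by simpa using hbound _)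
    (hae.mono fun x hx => by simpa using (hx.sub_const (g x)).norm)
  simpa using hlim

theorem tendsto_integral_abs_prod_sub_prod {ι : Type*} [Fintype ι] {f : ℕ → ι → α → ℝ}
    {c : ι → ℝ} (hf : ∀ n i, AEStronglyMeasurable (f n i) μ)
    (hf1 : ∀ n i, ∀ᵐ x ∂μ, |f n i x| ≤ 1) (hc1 : ∀ i, |c i| ≤ 1)
    (hfc : ∀ i, TendstoInMeasure μ (fun n => f n i) atTop fun _ => c i) :
    Tendsto (fun n => ∫ x, |∏ i, f n i x - ∏ i, c i| ∂μ) atTop (𝓝 0) := by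
  have hbound : ∀ n i, ∀ᵐ x ∂μ, |f n i x - c i| ≤ 2 := fun n i =>
    (hf1 n i).mono fun x hx => (abs_sub _ _).trans (by linarith [hc1 i])
  have hint : ∀ n i, Integrable (fun x => |f n i x - c i|) μ := fun n i =>
    Integrable.of_bound ((hf n i).sub aestronglyMeasurable_const).norm 2
      (by simpa using hbound n i)
  have hsum : Tendsto (fun n => ∑ i, ∫ x, |f n i x - c i| ∂μ) atTop (𝓝 0) := by
    simpa using tendsto_finsetSum Finset.univ fun i _ =>
      tendsto_integral_abs_sub_of_tendstoInMeasure (fun n => hf n i) aestronglyMeasurable_const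
        (fun n => hbound n i) (hfc i)
  refine squeeze_zero (fun n => integral_nonneg fun _ => abs_nonneg _) (fun n => ?_) hsum
  rw [← integral_finsetSum _ fun i _ => hint n i]
  refine integral_mono_of_nonneg (ae_of_all _ fun _ => abs_nonneg _)
    (integrable_finsetSum _ fun i _ => hint n i) ?_
  filter_upwards [ae_all_iff.2 (hf1 n)] with x hx
  simpa only [Real.norm_eq_abs] using Finset.norm_prod_sub_prod_le_sum_norm_sub Finset.univ
    (fun i _ => (Real.norm_eq_abs _).trans_le (hx i))
    (fun i _ => (Real.norm_eq_abs _).trans_le (hc1 i))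

end InMeasure

section CondExp

variable {Ω : Type*} {m mΩ : MeasurableSpace Ω} {P : Measure Ω} [IsFiniteMeasure P]

theorem measureReal_inter_eq_setIntegral_condExp (hm : m ≤ mΩ) {A B : Set Ω}
    (hA : MeasurableSet[m] A) (hB : MeasurableSet B) :
    P.real (A ∩ B) = ∫ ω in A, P[B.indicator (fun _ => (1 : ℝ)) | m] ω ∂P := by
  rw [setIntegral_condExp hm ((integrable_const 1).indicator hB) hA, setIntegral_indicator hB,
    setIntegral_const, smul_eq_mul, mul_one]

theorem tendsto_measureReal_inter_of_tendsto_condExp {κ : Type*} {l : Filter κ}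
    {𝒢 : κ → MeasurableSpace Ω} (h𝒢 : ∀ k, 𝒢 k ≤ mΩ) {A B : κ → Set Ω}
    (hA : ∀ k, MeasurableSet[𝒢 k] (A k)) (hB : ∀ k, MeasurableSet (B k)) {a c : ℝ}
    (hAa : Tendsto (fun k => P.real (A k)) l (𝓝 a))
    (hBc : Tendsto (fun k => ∫ ω, |P[(B k).indicator (fun _ => (1 : ℝ)) | 𝒢 k] ω - c| ∂P) l
      (𝓝 0)) :
    Tendsto (fun k => P.real (A k ∩ B k)) l (𝓝 (a * c)) := by
  have hdev (k : κ) : |P.real (A k ∩ B k) - P.real (A k) * c| ≤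
      ∫ ω, |P[(B k).indicator (fun _ => (1 : ℝ)) | 𝒢 k] ω - c| ∂P := by
    have hY : Integrable (fun ω => P[(B k).indicator (fun _ => (1 : ℝ)) | 𝒢 k] ω - c) P :=
      integrable_condExp.sub (integrable_const c)
    calc |P.real (A k ∩ B k) - P.real (A k) * c|
        = |∫ ω in A k, (P[(B k).indicator (fun _ => (1 : ℝ)) | 𝒢 k] ω - c) ∂P| := by
          rw [integral_sub integrable_condExp.integrableOn (integrable_const c).integrableOn,
            setIntegral_const, smul_eq_mul,
            measureReal_inter_eq_setIntegral_condExp (h𝒢 k) (hA k) (hB k)]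
      _ ≤ ∫ ω in A k, |P[(B k).indicator (fun _ => (1 : ℝ)) | 𝒢 k] ω - c| ∂P :=
          abs_integral_le_integral_abs
      _ ≤ ∫ ω, |P[(B k).indicator (fun _ => (1 : ℝ)) | 𝒢 k] ω - c| ∂P :=
          setIntegral_le_integral hY.abs (ae_of_all _ fun _ => abs_nonneg _)
  simpa using (squeeze_zero_norm hdev hBc).add (hAa.mul_const c)

end CondExp

theorem tendsto_integral_comp_of_tendsto_measureReal_le {Ω ι κ : Type*} [MeasurableSpace Ω]
    [Fintype ι] {l : Filter κ} [l.IsCountablyGenerated] {P : Measure Ω} [IsProbabilityMeasure P]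
    {X : κ → Ω → ι → ℝ} (hX : ∀ k, AEMeasurable (X k) P) {μ : Measure (ι → ℝ)}
    [IsProbabilityMeasure μ]
    (h : ∀ x, Tendsto (fun k => P.real {ω | X k ω ≤ x}) l (𝓝 (μ.real (Iic x))))
    (g : BoundedContinuousFunction (ι → ℝ) ℝ) :
    Tendsto (fun k => ∫ ω, g (X k ω) ∂P) l (𝓝 (∫ z, g z ∂μ)) := by
  let μs (k : κ) : ProbabilityMeasure (ι → ℝ) :=
    ⟨P.map (X k), Measure.isProbabilityMeasure_map (hX k)⟩
  have hlaw : Tendsto μs l (𝓝 ⟨μ, ‹_›⟩) :=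
    ProbabilityMeasure.tendsto_of_tendsto_measureReal_Iic fun x => by
      simp only [μs, ProbabilityMeasure.coe_mk, measureReal_def,
        Measure.map_apply₀ (hX _) measurableSet_Iic.nullMeasurableSet]
      exact h x
  simpa [μs, integral_map (hX _) g.continuous.aestronglyMeasurable] using
    ProbabilityMeasure.tendsto_iff_forall_integral_tendsto.1 hlaw g

/-- asymptotic sample–resample independence: let `𝒢_n ⊆ F` be sub-σ-algebras,
`Δ_n` a `𝒢_n`-measurable real random variable and `Δ_n^{*1}, …, Δ_n^{*B}` real random
variables that are conditionally independent given `𝒢_n` (encoded via the factorization of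
conditional joint CDFs). Let `Φ` be the CDF of a mean-zero Gaussian law on `ℝ` (variance `v`).
If `P(Δ_n ≤ x) → Φ(x)` for every `x` and `E[1{Δ_n^{*b} ≤ x} | 𝒢_n] → Φ(x)` in probability
for every `b` and `x`, then `(Δ_n, Δ_n^{*1}, …, Δ_n^{*B})` converges in distribution to a
vector of `B+1` i.i.d. variables with CDF `Φ`; in particular
`P(Δ_n ≤ x₀, Δ_n^{*1} ≤ x₁, …, Δ_n^{*B} ≤ x_B) → Φ(x₀)Φ(x₁)⋯Φ(x_B)`. -/
theorem joint_clt_of_conditional_convergence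
    {Ω : Type*} {F : MeasurableSpace Ω} (P : Measure Ω) [IsProbabilityMeasure P]
    (B : ℕ) (𝒢 : ℕ → MeasurableSpace Ω) (h𝒢 : ∀ n, 𝒢 n ≤ F)
    (v : NNReal)
    (Δ : ℕ → Ω → ℝ) (hΔmeas : ∀ n, Measurable[𝒢 n] (Δ n))
    (Δs : ℕ → Fin B → Ω → ℝ) (hΔsmeas : ∀ n b, Measurable (Δs n b))
    -- conditional independence of `Δ_n^{*1}, …, Δ_n^{*B}` given `𝒢_n`
    (hcondindep : ∀ (n : ℕ) (x : Fin B → ℝ),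
      (P[Set.indicator {ω | ∀ b, Δs n b ω ≤ x b} (fun _ => (1 : ℝ)) | 𝒢 n])
        =ᵐ[P] fun ω =>
          ∏ b : Fin B, (P[Set.indicator {ω' | Δs n b ω' ≤ x b} (fun _ => (1 : ℝ)) | 𝒢 n]) ω)
    -- (i) unconditional CDF convergence of `Δ_n`
    (hΔconv : ∀ x : ℝ,
      Tendsto (fun n => (P {ω | Δ n ω ≤ x}).toReal) atTop
        (nhds ((gaussianReal 0 v (Set.Iic x)).toReal)))
    -- (ii) conditional CDF convergence (in probability) of each `Δ_n^{*b}`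
    (hΔsconv : ∀ (b : Fin B) (x : ℝ),
      TendstoInMeasure P
        (fun n => P[Set.indicator {ω' | Δs n b ω' ≤ x} (fun _ => (1 : ℝ)) | 𝒢 n])
        atTop (fun _ => (gaussianReal 0 v (Set.Iic x)).toReal)) :
    -- convergence in distribution to `B+1` i.i.d. variables with law `N(0,v)` …
    (∀ g : BoundedContinuousFunction (Fin (B + 1) → ℝ) ℝ,
      Tendsto (fun n => ∫ ω, g (Fin.cases (Δ n ω) (fun b => Δs n b ω)) ∂P) atTop
        (nhds (∫ z, g z ∂(Measure.pi fun _ : Fin (B + 1) => gaussianReal 0 v)))) ∧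
    -- … and in particular joint CDF factorization in the limit
    (∀ (x₀ : ℝ) (x : Fin B → ℝ),
      Tendsto (fun n => (P {ω | Δ n ω ≤ x₀ ∧ ∀ b, Δs n b ω ≤ x b}).toReal) atTop
        (nhds ((gaussianReal 0 v (Set.Iic x₀)).toReal *
          ∏ b : Fin B, (gaussianReal 0 v (Set.Iic (x b))).toReal))) := by
  have hΦ (y : ℝ) : |(gaussianReal 0 v (Set.Iic y)).toReal| ≤ 1 := by
    rw [abs_of_nonneg ENNReal.toReal_nonneg]
    exact measureReal_le_one
  have hcdf (x₀ : ℝ) (x : Fin B → ℝ) :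
      Tendsto (fun n => (P {ω | Δ n ω ≤ x₀ ∧ ∀ b, Δs n b ω ≤ x b}).toReal) atTop
        (nhds ((gaussianReal 0 v (Set.Iic x₀)).toReal *
          ∏ b : Fin B, (gaussianReal 0 v (Set.Iic (x b))).toReal)) := by
    refine tendsto_measureReal_inter_of_tendsto_condExp h𝒢 (fun n => hΔmeas n measurableSet_Iic)
      (B := fun n => {ω | ∀ b, Δs n b ω ≤ x b})
      (fun n => by
        simpa only [ofPred_forall] using
          MeasurableSet.iInter fun b => measurableSet_le (hΔsmeas n b) measurable_const)
      (hΔconv x₀) ?_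
    refine (tendsto_integral_abs_prod_sub_prod
      (fun n b => (stronglyMeasurable_condExp.mono (h𝒢 n)).aestronglyMeasurable)
      (fun n b => ae_bdd_abs_condExp_of_ae_bdd_abs (ae_of_all _ fun ω => by
        simpa using norm_indicator_le_norm_self (fun _ => (1 : ℝ)) ω))
      (fun b => hΦ (x b)) (fun b => hΔsconv b (x b))).congr fun n => ?_
    exact integral_congr_ae ((hcondindep n x).mono fun ω hω => by simp only [hω])
  refine ⟨fun g => ?_, hcdf⟩
  have hX (n : ℕ) :
      Measurable fun ω => (Fin.cases (Δ n ω) (fun b => Δs n b ω) : Fin (B + 1) → ℝ) :=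
    measurable_pi_iff.2 (Fin.cases ((hΔmeas n).mono (h𝒢 n) le_rfl) (hΔsmeas n))
  refine tendsto_integral_comp_of_tendsto_measureReal_le (fun n => (hX n).aemeasurable)
    (fun x => ?_) g
  have hset (n : ℕ) : {ω | (Fin.cases (Δ n ω) (fun b => Δs n b ω) : Fin (B + 1) → ℝ) ≤ x} =
      {ω | Δ n ω ≤ x 0 ∧ ∀ b, Δs n b ω ≤ x b.succ} := by
    simp [Pi.le_def, Fin.forall_fin_succ]
  simp only [hset, ← pi_univ_Iic, measureReal_def, Measure.pi_pi, Fin.prod_univ_succ,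
    ENNReal.toReal_mul, ENNReal.toReal_prod]
  exact hcdf (x 0) fun b => x b.succ
end

section
/- Let (Ω, F, P) be a probability space, for each n let ω ↦ μ_n^ω be a random probability measure on ℝ (i.e., ω ↦ ∫ g dμ_n^ω is measurable for every bounded continuous g), and let μ be a fixed probability measure on ℝ. Suppose that for every bounded continuous g : ℝ → ℝ, the random variables ∫ g dμ_n^ω converge in probability to ∫ g dμ. Then for every Borel set D ⊆ ℝ whose topological boundary satisfies μ(∂D) = 0, the random variables μ_n^ω(D) converge in probability to μ(D). -/
/-!
Approximate the indicator of a closed set `F` from above by bounded continuous functions `g`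
with `∫ g dμ` close to `μ F`. Since `κₙ F ≤ ∫ g dκₙ` and `∫ g dκₙ → ∫ g dμ` in probability,
the event `κₙ F ≥ μ F + ε` has vanishing probability; complements give the mirror bound for
open sets. A set `D` with `μ (∂D) = 0` lies between `interior D` and `closure D`, which both
have `μ`-measure `μ D`, so the two one-sided bounds combine to the claim.
-/

open MeasureTheory Filter Topology BoundedContinuousFunction

namespace HasOuterApproxClosed

variable {X : Type*} [TopologicalSpace X] [HasOuterApproxClosed X] {F : Set X}

noncomputable def _root_.IsClosed.apprSeqReal (hF : IsClosed F) (n : ℕ) : X →ᵇ ℝ :=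
  (hF.apprSeq n).comp _ NNReal.isometry_coe.lipschitz

variable [MeasurableSpace X] [OpensMeasurableSpace X] (hF : IsClosed F)

lemma integral_apprSeqReal (ν : Measure X) (n : ℕ) :
    ∫ x, hF.apprSeqReal n x ∂ν = (∫⁻ x, hF.apprSeq n x ∂ν).toReal :=
  (toReal_lintegral_coe_eq_integral _ ν).symm

lemma measureReal_le_integral_apprSeqReal (ν : Measure X) [IsFiniteMeasure ν] (n : ℕ) :
    ν.real F ≤ ∫ x, hF.apprSeqReal n x ∂ν := by
  rw [integral_apprSeqReal]
  exact ENNReal.toReal_mono ((hF.apprSeq n).lintegral_lt_top_of_nnreal ν).ne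
    (measure_le_lintegral hF ν n)

lemma tendsto_integral_apprSeqReal (μ : Measure X) [IsFiniteMeasure μ] :
    Tendsto (fun n => ∫ x, hF.apprSeqReal n x ∂μ) atTop (𝓝 (μ.real F)) := by
  simp_rw [integral_apprSeqReal]
  exact (ENNReal.tendsto_toReal (measure_ne_top μ F)).comp (tendsto_lintegral_apprSeq hF μ)

end HasOuterApproxClosed

namespace MeasureTheory

variable {Ω ι : Type*} [MeasurableSpace Ω] {P : Measure Ω} {l : Filter ι} {ε : ℝ}

lemma tendsto_measure_setOf_add_le_of_le_of_tendstoInMeasure {Y Z : ι → Ω → ℝ} {c : ℝ}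
    (hYZ : ∀ i ω, Y i ω ≤ Z i ω) (hZ : TendstoInMeasure P Z l fun _ => c) (hε : 0 < ε) :
    Tendsto (fun i => P {ω | c + ε ≤ Y i ω}) l (𝓝 0) := by
  refine tendsto_of_tendsto_of_tendsto_of_le_of_le tendsto_const_nhds
    (tendstoInMeasure_iff_dist.mp hZ ε hε) (fun _ => zero_le) fun i => measure_mono ?_
  intro ω (hω : c + ε ≤ Y i ω)
  show ε ≤ |Z i ω - c|
  exact le_abs.mpr (Or.inl (by linarith [hYZ i ω]))

open HasOuterApproxClosed

variable {X : Type*} [TopologicalSpace X] [MeasurableSpace X] [OpensMeasurableSpace X]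
  [HasOuterApproxClosed X] {κ : ι → Ω → Measure X} {μ : Measure X}

lemma tendsto_measure_setOf_measureReal_add_le_of_isClosed
    [∀ i ω, IsFiniteMeasure (κ i ω)] [IsFiniteMeasure μ]
    (hconv : ∀ g : X →ᵇ ℝ,
      TendstoInMeasure P (fun i ω => ∫ x, g x ∂(κ i ω)) l fun _ => ∫ x, g x ∂μ)
    {F : Set X} (hF : IsClosed F) (hε : 0 < ε) :
    Tendsto (fun i => P {ω | μ.real F + ε ≤ (κ i ω).real F}) l (𝓝 0) := by
  obtain ⟨m, hm⟩ : ∃ m, ∫ x, hF.apprSeqReal m x ∂μ < μ.real F + ε / 2 :=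
    ((tendsto_integral_apprSeqReal hF μ).eventually (gt_mem_nhds (by linarith))).exists
  have hsmall := tendsto_measure_setOf_add_le_of_le_of_tendstoInMeasure
    (fun i ω => measureReal_le_integral_apprSeqReal hF (κ i ω) m) (hconv (hF.apprSeqReal m))
    (half_pos hε)
  refine tendsto_of_tendsto_of_tendsto_of_le_of_le tendsto_const_nhds hsmall
    (fun _ => zero_le) fun i => measure_mono ?_
  intro ω (hω : μ.real F + ε ≤ (κ i ω).real F)
  show _ + ε / 2 ≤ (κ i ω).real F
  linarith

lemma tendsto_measure_setOf_le_measureReal_sub_of_isOpen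
    [∀ i ω, IsProbabilityMeasure (κ i ω)] [IsProbabilityMeasure μ]
    (hconv : ∀ g : X →ᵇ ℝ,
      TendstoInMeasure P (fun i ω => ∫ x, g x ∂(κ i ω)) l fun _ => ∫ x, g x ∂μ)
    {U : Set X} (hU : IsOpen U) (hε : 0 < ε) :
    Tendsto (fun i => P {ω | (κ i ω).real U ≤ μ.real U - ε}) l (𝓝 0) := by
  have h := tendsto_measure_setOf_measureReal_add_le_of_isClosed hconv hU.isClosed_compl hε
  simp_rw [probReal_compl_eq_one_sub hU.measurableSet] at h
  convert h using 4 with i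
  ext ω
  constructor <;> intro <;> linarith

theorem tendstoInMeasure_measureReal_of_null_frontier
    [∀ i ω, IsProbabilityMeasure (κ i ω)] [IsProbabilityMeasure μ]
    (hconv : ∀ g : X →ᵇ ℝ,
      TendstoInMeasure P (fun i ω => ∫ x, g x ∂(κ i ω)) l fun _ => ∫ x, g x ∂μ)
    {D : Set X} (hfrontier : μ (frontier D) = 0) :
    TendstoInMeasure P (fun i ω => (κ i ω).real D) l fun _ => μ.real D := by
  rw [tendstoInMeasure_iff_dist]
  intro ε hε
  have hcl := tendsto_measure_setOf_measureReal_add_le_of_isClosed hconv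
    (isClosed_closure (s := D)) hε
  have hint := tendsto_measure_setOf_le_measureReal_sub_of_isOpen hconv
    (isOpen_interior (s := D)) hε
  rw [Measure.real, measure_closure_of_null_frontier hfrontier, ← Measure.real] at hcl
  rw [Measure.real, measure_interior_of_null_frontier hfrontier, ← Measure.real] at hint
  refine tendsto_of_tendsto_of_tendsto_of_le_of_le tendsto_const_nhds (by simpa using hcl.add hint)
    (fun _ => zero_le) fun i => (measure_mono ?_).trans (measure_union_le _ _)
  intro ω (hω : ε ≤ |(κ i ω).real D - μ.real D|)
  have hle_closure : (κ i ω).real D ≤ (κ i ω).real (closure D) :=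
    measureReal_mono subset_closure
  have hinterior_le : (κ i ω).real (interior D) ≤ (κ i ω).real D :=
    measureReal_mono interior_subset
  rcases le_abs.mp hω with h | h
  · exact Or.inl (show _ ≤ (κ i ω).real (closure D) by linarith)
  · exact Or.inr (show (κ i ω).real (interior D) ≤ _ by linarith)

end MeasureTheory

theorem tendstoInMeasure_measure_of_tendstoInMeasure_integrals_general
    {Ω : Type*} [MeasurableSpace Ω] (P : Measure Ω)
    (κ : ℕ → Ω → Measure ℝ)
    (hκprob : ∀ n ω, IsProbabilityMeasure (κ n ω))
    (μ : Measure ℝ) [IsProbabilityMeasure μ]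
    (hconv : ∀ g : BoundedContinuousFunction ℝ ℝ,
      TendstoInMeasure P (fun n ω => ∫ x, g x ∂(κ n ω)) atTop (fun _ => ∫ x, g x ∂μ))
    (D : Set ℝ) (hfrontier : μ (frontier D) = 0) :
    TendstoInMeasure P (fun n ω => (κ n ω D).toReal) atTop (fun _ => (μ D).toReal) :=
  tendstoInMeasure_measureReal_of_null_frontier hconv hfrontier

/-- in-probability portmanteau for random measures: if the random probability
measures `μ_n^ω` on `ℝ` satisfy `∫ g dμ_n^ω → ∫ g dμ` in probability for every bounded
continuous `g`, then `μ_n^ω(D) → μ(D)` in probability for every Borel set `D` with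
`μ(∂D) = 0`. -/
theorem tendstoInMeasure_measure_of_tendstoInMeasure_integrals
    {Ω : Type*} [MeasurableSpace Ω] (P : Measure Ω) [IsProbabilityMeasure P]
    (κ : ℕ → Ω → Measure ℝ)
    (hκprob : ∀ n ω, IsProbabilityMeasure (κ n ω))
    (hκmeas : ∀ (n : ℕ) (g : BoundedContinuousFunction ℝ ℝ),
      Measurable (fun ω => ∫ x, g x ∂(κ n ω)))
    (μ : Measure ℝ) [IsProbabilityMeasure μ]
    (hconv : ∀ g : BoundedContinuousFunction ℝ ℝ,
      TendstoInMeasure P (fun n ω => ∫ x, g x ∂(κ n ω)) atTop (fun _ => ∫ x, g x ∂μ))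
    (D : Set ℝ) (hD : MeasurableSet D) (hfrontier : μ (frontier D) = 0) :
    TendstoInMeasure P (fun n ω => (κ n ω D).toReal) atTop (fun _ => (μ D).toReal) :=
  tendstoInMeasure_measure_of_tendstoInMeasure_integrals_general P κ hκprob μ hconv D hfrontier
end
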